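/- arXiv:1206.6597 — 5 statements merged into one kernel-verified Lean document; each statement's English description precedes it below -/
import Mathlib

section
/- A unimodular lattice Λ ⊆ ℝ² is horizontally short (i.e., contains a nonzero horizontal vector (a,0) with 0 < a ≤ 1) if and only if there exists (a,b) ∈ Ω with Λ = Λ_{a,b}. -/
/-!
A horizontal vector `(a, 0) = g m` of `Λ = g ℤ²` is `d` times the image `(a / d, 0)` of a
primitive vector of `ℤ²`. Completing that primitive vector to a basis, i.e. to a matrix in
`SL(2, ℤ)`, turns `g` into an upper triangular matrix of determinant one, which is `p_{a/d, b}`.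
Shearing by `[[1, k], [0, 1]]` changes `b` by `k a / d`, which brings `(a / d, b)` into `Ω`.
-/

open MeasureTheory

noncomputable section

/-- The Farey triangle `Ω = {(a,b) : 0 < a ≤ 1, 0 < b ≤ 1, a + b > 1}`. -/
def FareyTriangle : Set (ℝ × ℝ) :=
  {p | 0 < p.1 ∧ p.1 ≤ 1 ∧ 0 < p.2 ∧ p.2 ≤ 1 ∧ 1 < p.1 + p.2}

/-- The lattice `g·ℤ² ⊆ ℝ²`. -/
def latticeOf (g : Matrix (Fin 2) (Fin 2) ℝ) : Set (Fin 2 → ℝ) :=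
  {v | ∃ m : Fin 2 → ℤ, v = g.mulVec fun i => (m i : ℝ)}

/-- A unimodular lattice is the image of `ℤ²` under a matrix of determinant one. -/
def IsUnimodularLattice (Λ : Set (Fin 2 → ℝ)) : Prop :=
  ∃ g : Matrix (Fin 2) (Fin 2) ℝ, g.det = 1 ∧ Λ = latticeOf g

/-- A lattice is horizontally short if it contains a vector `(a,0)` with `0 < a ≤ 1`. -/
def HorizontallyShort (Λ : Set (Fin 2 → ℝ)) : Prop :=
  ∃ a : ℝ, 0 < a ∧ a ≤ 1 ∧ ![a, 0] ∈ Λ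

/-- The matrix `p_{a,b} = [[a, b], [0, a⁻¹]]`. -/
def pMat (a b : ℝ) : Matrix (Fin 2) (Fin 2) ℝ := !![a, b; 0, a⁻¹]

namespace Matrix

lemma intCast_map_mulVec {ι κ R : Type*} [Fintype κ] [Ring R] (M : Matrix ι κ ℤ) (m : κ → ℤ) :
    M.map (Int.cast : ℤ → R) *ᵥ (fun i => (m i : R)) = fun i => ((M *ᵥ m) i : R) :=
  funext fun i => ((Int.castRingHom R).map_mulVec M m i).symm

lemma exists_det_eq_one_of_isCoprime {R : Type*} [CommRing R] {p q : R} (h : IsCoprime p q) :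
    ∃ M : Matrix (Fin 2) (Fin 2) R, M.det = 1 ∧ M 0 0 = p ∧ M 1 0 = q := by
  obtain ⟨u, v, huv⟩ := h
  exact ⟨!![p, -v; q, u], by rw [det_fin_two_of]; linear_combination huv, rfl, rfl⟩

end Matrix

open Matrix

lemma eq_pMat_of_det_eq_one {B : Matrix (Fin 2) (Fin 2) ℝ} (hdet : B.det = 1) (h10 : B 1 0 = 0) :
    B = pMat (B 0 0) (B 0 1) := by
  have h11 : B 1 1 = (B 0 0)⁻¹ := by
    rw [det_fin_two, h10] at hdet
    exact eq_inv_of_mul_eq_one_right (by linarith)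
  rw [eta_fin_two B, h10, h11]
  rfl

lemma Int.exists_isCoprime_smul_eq {m : Fin 2 → ℤ} (hm : m ≠ 0) :
    ∃ (d : ℕ) (m' : Fin 2 → ℤ), 0 < d ∧ IsCoprime (m' 0) (m' 1) ∧ m = (d : ℤ) • m' := by
  have hgcd : 0 < Int.gcd (m 0) (m 1) := by
    refine Int.gcd_pos_iff.2 (not_and_or.1 fun h => hm ?_)
    ext i; fin_cases i <;> simp [h.1, h.2]
  obtain ⟨d, p, q, hd, hpq, hp, hq⟩ := Int.exists_gcd_one' hgcd
  refine ⟨d, ![p, q], hd, Int.isCoprime_iff_gcd_eq_one.2 hpq, ?_⟩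
  ext i; fin_cases i <;> simp [hp, hq, mul_comm]

lemma exists_isCoprime_mulVec_eq_inv_smul {g : Matrix (Fin 2) (Fin 2) ℝ} {v : Fin 2 → ℝ}
    (hv : v ∈ latticeOf g) (hv0 : v ≠ 0) : ∃ (d : ℕ) (m : Fin 2 → ℤ), 0 < d ∧
      IsCoprime (m 0) (m 1) ∧ g *ᵥ (fun i => (m i : ℝ)) = (d : ℝ)⁻¹ • v := by
  obtain ⟨m, rfl⟩ := hv
  have hm0 : m ≠ 0 := by
    rintro rfl
    simp at hv0
  obtain ⟨d, m', hd, hcop, rfl⟩ := Int.exists_isCoprime_smul_eq hm0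
  refine ⟨d, m', hd, hcop, ?_⟩
  have hcast : (fun i => (((d : ℤ) • m') i : ℝ)) = (d : ℝ) • fun i => (m' i : ℝ) := by
    ext i; simp
  rw [hcast, mulVec_smul, inv_smul_smul₀ (by positivity)]

lemma latticeOf_mul_intCast (g : Matrix (Fin 2) (Fin 2) ℝ) {M : Matrix (Fin 2) (Fin 2) ℤ}
    (hM : IsUnit M.det) : latticeOf (g * M.map (Int.cast : ℤ → ℝ)) = latticeOf g := by
  have hinv : M.map (Int.cast : ℤ → ℝ) * M⁻¹.map (Int.cast : ℤ → ℝ) = 1 := by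
    simpa [mul_nonsing_inv M hM] using
      (Matrix.map_mul (L := M) (M := M⁻¹) (f := Int.castRingHom ℝ)).symm
  ext v
  constructor
  · rintro ⟨m, rfl⟩
    exact ⟨M *ᵥ m, by rw [← mulVec_mulVec, intCast_map_mulVec]⟩
  · rintro ⟨m, rfl⟩
    refine ⟨M⁻¹ *ᵥ m, ?_⟩
    rw [← intCast_map_mulVec, mulVec_mulVec, mul_assoc, hinv, mul_one]

lemma latticeOf_pMat_add_zsmul (a b : ℝ) (k : ℤ) :
    latticeOf (pMat a (b + k • a)) = latticeOf (pMat a b) := by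
  have hshear : pMat a b * (!![1, k; 0, 1] : Matrix (Fin 2) (Fin 2) ℤ).map (Int.cast : ℤ → ℝ) =
      pMat a (b + k • a) := by
    ext i j; fin_cases i <;> fin_cases j <;> simp [pMat, mul_apply, Fin.sum_univ_two]; ring
  rw [← hshear, latticeOf_mul_intCast _ (by simp [det_fin_two_of])]

lemma vecCons_mem_latticeOf_pMat (a b : ℝ) : ![a, 0] ∈ latticeOf (pMat a b) :=
  ⟨![1, 0], by ext i; fin_cases i <;> simp [pMat, mulVec, dotProduct, Fin.sum_univ_two]⟩

lemma exists_latticeOf_eq_pMat {g : Matrix (Fin 2) (Fin 2) ℝ} (hg : g.det = 1) {a : ℝ}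
    {m : Fin 2 → ℤ} (hm : IsCoprime (m 0) (m 1)) (hgm : g *ᵥ (fun i => (m i : ℝ)) = ![a, 0]) :
    ∃ b, latticeOf g = latticeOf (pMat a b) := by
  obtain ⟨M, hdet, h00, h10⟩ := exists_det_eq_one_of_isCoprime hm
  set B := g * M.map (Int.cast : ℤ → ℝ)
  have hcol : ∀ i, B i 0 = ![a, 0] i := fun i => by
    rw [← hgm]; simp [B, mul_apply, mulVec, dotProduct, Fin.sum_univ_two, h00, h10]
  have hB : B = pMat a (B 0 1) := by
    rw [eq_pMat_of_det_eq_one (by simp [B, hg, ← Int.cast_det, hdet]) (hcol 1), hcol 0]; rfl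
  exact ⟨B 0 1, by rw [← latticeOf_mul_intCast g (hdet ▸ isUnit_one), ← hB]⟩

lemma exists_mem_fareyTriangle_latticeOf_pMat_eq {a : ℝ} (ha0 : 0 < a) (ha1 : a ≤ 1) (b : ℝ) :
    ∃ b', (a, b') ∈ FareyTriangle ∧ latticeOf (pMat a b') = latticeOf (pMat a b) := by
  -- `toIocMod` reduces `b` modulo `a` into `(1 - a, 1]`.
  obtain ⟨hlo, hhi⟩ := toIocMod_mem_Ioc ha0 (1 - a) b
  rw [sub_add_cancel] at hhi
  refine ⟨toIocMod ha0 (1 - a) b, ⟨ha0, ha1, by linarith, hhi, by linarith⟩, ?_⟩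
  rw [← self_sub_toIocDiv_zsmul, sub_eq_add_neg, ← neg_zsmul, latticeOf_pMat_add_zsmul]

theorem horizontally_short_iff_farey_triangle (Λ : Set (Fin 2 → ℝ))
    (hΛ : IsUnimodularLattice Λ) :
    HorizontallyShort Λ ↔
      ∃ a b : ℝ, (a, b) ∈ FareyTriangle ∧ Λ = latticeOf (pMat a b) := by
  constructor
  · obtain ⟨g, hg, rfl⟩ := hΛ
    rintro ⟨a, ha0, ha1, hmem⟩
    obtain ⟨d, m, hd, hcop, hgm⟩ :=
      exists_isCoprime_mulVec_eq_inv_smul hmem (by simp [ha0.ne'])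
    have hdR : (1 : ℝ) ≤ d := by exact_mod_cast hd
    have hprim : (d : ℝ)⁻¹ • ![a, 0] = ![a / d, 0] := by
      ext i; fin_cases i <;> simp [div_eq_inv_mul]
    obtain ⟨b, hb⟩ := exists_latticeOf_eq_pMat hg hcop (hgm.trans hprim)
    obtain ⟨b', hfarey, hb'⟩ := exists_mem_fareyTriangle_latticeOf_pMat_eq
      (div_pos ha0 (by linarith)) (div_le_one_of_le₀ (ha1.trans hdR) (by linarith)) b
    exact ⟨a / d, b', hfarey, hb.trans hb'.symm⟩
  · rintro ⟨a, b, hab, rfl⟩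
    exact ⟨a, hab.1, hab.2.1, vecCons_mem_latticeOf_pMat a b⟩
end
end

section
/- Let Λ ⊆ ℝ² be a unimodular lattice containing no nonzero vertical vector (0,y) with |y| ≤ 1. Then the set S_Λ = {s ∈ ℝ : h_s·Λ is horizontally short} is nonempty, and any two distinct elements of S_Λ differ by at least 1; in particular S_Λ is countable and discrete. -/
open MeasureTheory

noncomputable section

/-- The horocycle matrix `h_s = [[1, 0], [-s, 1]]`. -/
def hMat (s : ℝ) : Matrix (Fin 2) (Fin 2) ℝ := !![1, 0; -s, 1]

/-- The action of `h_s` on a lattice. -/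
def hAct (s : ℝ) (Λ : Set (Fin 2 → ℝ)) : Set (Fin 2 → ℝ) :=
  (fun v => (hMat s).mulVec v) '' Λ

/-!
If `v, w ∈ Λ = g ℤ²` then `v 0 * w 1 - v 1 * w 0 ∈ (det g) ℤ`. A hitting time `s` is
witnessed by some `v ∈ Λ` with `0 < v 0 ≤ 1` and `v 1 = s * v 0`; for witnesses `v, w` of
`s ≠ s'` this cross product is `v 0 * w 0 * (s' - s) ≠ 0`, so
`1 ≤ v 0 * w 0 * |s - s'| ≤ |s - s'|`.
Minkowski's theorem for the square `[-1, 1]²` of area `4` gives `x ∈ Λ \ {0}` with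
`|x 0|, |x 1| ≤ 1`; as `Λ` has no short vertical vectors, `x 0 ≠ 0`, and up to sign `x`
witnesses the hitting time `x 1 / x 0`.
-/

namespace Matrix

variable {n : Type*} [Fintype n] [DecidableEq n]

def columnBasis (g : Matrix n n ℝ) (hg : g.det ≠ 0) : Module.Basis n ℝ (n → ℝ) :=
  (Pi.basisFun ℝ n).map (g.toLinearEquiv' (g.invertibleOfIsUnitDet hg.isUnit))

theorem columnBasis_apply (g : Matrix n n ℝ) (hg : g.det ≠ 0) (i : n) :
    g.columnBasis hg i = gᵀ i := by
  rw [columnBasis, Module.Basis.map_apply, Pi.basisFun_apply]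
  exact mulVec_single_one g i

theorem of_columnBasis (g : Matrix n n ℝ) (hg : g.det ≠ 0) : of (g.columnBasis hg) = gᵀ := by
  ext i j
  rw [of_apply, columnBasis_apply]

theorem mulVec_intCast_eq_linearCombination_columnBasis (g : Matrix n n ℝ) (hg : g.det ≠ 0)
    (k : n → ℤ) :
    g *ᵥ (fun i => (k i : ℝ)) = Fintype.linearCombination ℤ (g.columnBasis hg) k := by
  ext j
  simp [mulVec_eq_sum, Fintype.linearCombination_apply, columnBasis_apply, mul_comm]

end Matrix

theorem coe_span_columnBasis (g : Matrix (Fin 2) (Fin 2) ℝ) (hg : g.det ≠ 0) :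
    (Submodule.span ℤ (Set.range (g.columnBasis hg)) : Set (Fin 2 → ℝ)) = latticeOf g := by
  rw [← Fintype.range_linearCombination, LinearMap.coe_range]
  ext v
  simp only [latticeOf, Set.mem_range, Set.mem_ofPred_eq,
    g.mulVec_intCast_eq_linearCombination_columnBasis hg, eq_comm]

theorem exists_ne_zero_mem_latticeOf_norm_le_one {g : Matrix (Fin 2) (Fin 2) ℝ}
    (hg : g.det ≠ 0) (hg_le : |g.det| ≤ 1) :
    ∃ x ∈ latticeOf g, x ≠ 0 ∧ ‖x‖ ≤ 1 := by
  set b := g.columnBasis hg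
  have : Countable (Submodule.span ℤ (Set.range b)).toAddSubgroup :=
    inferInstanceAs (Countable (Submodule.span ℤ (Set.range b)))
  have hvol : volume (ZSpan.fundamentalDomain b) * 2 ^ Module.finrank ℝ (Fin 2 → ℝ)
      ≤ volume (Metric.closedBall (0 : Fin 2 → ℝ) 1) := by
    rw [ZSpan.volume_fundamentalDomain, Matrix.of_columnBasis, Matrix.det_transpose,
      Real.volume_pi_closedBall 0 zero_le_one]
    simp only [Fintype.card_fin, Module.finrank_fin_fun, mul_one, ENNReal.ofReal_pow zero_le_two,
      ENNReal.ofReal_ofNat]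
    exact mul_le_of_le_one_left bot_le (ENNReal.ofReal_le_one.mpr hg_le)
  obtain ⟨x, hx0, hx⟩ := exists_ne_zero_mem_lattice_of_measure_mul_two_pow_le_measure
    (ZSpan.isAddFundamentalDomain' b volume) (fun x hx => by simpa using hx)
    (convex_closedBall 0 1) (isCompact_closedBall 0 1) hvol
  refine ⟨x, ?_, by simpa using hx0, mem_closedBall_zero_iff.mp hx⟩
  rw [← coe_span_columnBasis g hg]
  exact x.2

theorem neg_mem_latticeOf {g : Matrix (Fin 2) (Fin 2) ℝ} {v : Fin 2 → ℝ}
    (hv : v ∈ latticeOf g) : -v ∈ latticeOf g := by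
  obtain ⟨m, rfl⟩ := hv
  exact ⟨-m, by ext i; simp [Matrix.mulVec_eq_sum]⟩

theorem exists_int_cross_eq_mul_det {g : Matrix (Fin 2) (Fin 2) ℝ} {v w : Fin 2 → ℝ}
    (hv : v ∈ latticeOf g) (hw : w ∈ latticeOf g) :
    ∃ k : ℤ, v 0 * w 1 - v 1 * w 0 = k * g.det := by
  obtain ⟨m, rfl⟩ := hv
  obtain ⟨n, rfl⟩ := hw
  refine ⟨m 0 * n 1 - m 1 * n 0, ?_⟩
  simp [Matrix.det_fin_two, Matrix.mulVec_eq_sum]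
  ring

theorem hMat_mulVec (s : ℝ) (v : Fin 2 → ℝ) : (hMat s).mulVec v = ![v 0, v 1 - s * v 0] := by
  ext i
  fin_cases i <;> simp [hMat, Matrix.mulVec_eq_sum]
  ring

theorem horizontallyShort_hAct_iff (Λ : Set (Fin 2 → ℝ)) (s : ℝ) :
    HorizontallyShort (hAct s Λ) ↔ ∃ v ∈ Λ, 0 < v 0 ∧ v 0 ≤ 1 ∧ v 1 = s * v 0 := by
  simp only [HorizontallyShort, hAct, Set.mem_image, hMat_mulVec]
  constructor
  · rintro ⟨a, ha0, ha1, v, hv, hva⟩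
    obtain ⟨rfl, hvs⟩ : v 0 = a ∧ v 1 - s * v 0 = 0 := by simpa using hva
    exact ⟨v, hv, ha0, ha1, sub_eq_zero.mp hvs⟩
  · rintro ⟨v, hv, hv0, hv1, hvs⟩
    exact ⟨v 0, hv0, hv1, v, hv, by rw [hvs, sub_self]⟩

theorem abs_det_le_abs_sub_of_horizontallyShort {g : Matrix (Fin 2) (Fin 2) ℝ} {s s' : ℝ}
    (hs : HorizontallyShort (hAct s (latticeOf g)))
    (hs' : HorizontallyShort (hAct s' (latticeOf g))) (hne : s ≠ s') :
    |g.det| ≤ |s - s'| := by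
  obtain ⟨v, hv, hv0, hv1, hvs⟩ := (horizontallyShort_hAct_iff _ s).mp hs
  obtain ⟨w, hw, hw0, hw1, hws⟩ := (horizontallyShort_hAct_iff _ s').mp hs'
  obtain ⟨k, hk⟩ := exists_int_cross_eq_mul_det hv hw
  have hcross : v 0 * w 1 - v 1 * w 0 = v 0 * w 0 * (s' - s) := by rw [hvs, hws]; ring
  have hk0 : k ≠ 0 := by
    rintro rfl
    have : s' - s ≠ 0 := sub_ne_zero.mpr hne.symm
    have : v 0 * w 0 * (s' - s) ≠ 0 := by positivity
    rw [← hcross, hk, Int.cast_zero, zero_mul] at this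
    exact this rfl
  calc |g.det|
      ≤ |(k : ℝ)| * |g.det| :=
        le_mul_of_one_le_left (abs_nonneg _) (by exact_mod_cast Int.one_le_abs hk0)
    _ = v 0 * w 0 * |s - s'| := by
      rw [← abs_mul, ← hk, hcross, abs_mul, abs_of_pos (by positivity), abs_sub_comm]
    _ ≤ |s - s'| := mul_le_of_le_one_left (abs_nonneg _) (mul_le_one₀ hv1 hw0.le hw1)

theorem exists_mem_latticeOf_pos_le_one {g : Matrix (Fin 2) (Fin 2) ℝ}
    (hg : g.det ≠ 0) (hg_le : |g.det| ≤ 1)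
    (hvert : ∀ y : ℝ, |y| ≤ 1 → ![0, y] ∈ latticeOf g → y = 0) :
    ∃ v ∈ latticeOf g, 0 < v 0 ∧ v 0 ≤ 1 := by
  obtain ⟨x, hx, hx_ne, hx_norm⟩ := exists_ne_zero_mem_latticeOf_norm_le_one hg hg_le
  have habs : ∀ i, |x i| ≤ 1 := fun i => (norm_le_pi_norm x i).trans hx_norm
  have hx0 : x 0 ≠ 0 := by
    intro h
    have hx_vert : x = ![0, x 1] := by ext i; fin_cases i <;> simp [h]
    apply hx_ne
    rw [hx_vert, hvert _ (habs 1) (hx_vert ▸ hx)]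
    simp
  rcases hx0.lt_or_gt with hneg | hpos
  · exact ⟨-x, neg_mem_latticeOf hx, by simpa using hneg,
      neg_le.mp (neg_le_of_abs_le (habs 0))⟩
  · exact ⟨x, hx, hpos, le_of_abs_le (habs 0)⟩

theorem Set.Countable.of_pairwise_le_abs_sub {S : Set ℝ} {ε : ℝ} (hε : 0 < ε)
    (hS : S.Pairwise fun s s' => ε ≤ |s - s'|) : S.Countable := by
  refine Set.countable_of_injective_of_countable_image (f := fun s => ⌊s / ε⌋) ?_
    (Set.to_countable _)
  intro s hs s' hs' hss'
  by_contra hne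
  have hlt := Int.abs_sub_lt_one_of_floor_eq_floor hss'
  rw [← sub_div, abs_div, abs_of_pos hε, div_lt_one hε] at hlt
  exact (hS hs hs' hne).not_gt hlt

theorem horocycle_hitting_times_nonempty_and_separated (Λ : Set (Fin 2 → ℝ))
    (hΛ : IsUnimodularLattice Λ)
    (hvert : ∀ y : ℝ, |y| ≤ 1 → ![0, y] ∈ Λ → y = 0) :
    {s : ℝ | HorizontallyShort (hAct s Λ)}.Nonempty ∧
    (∀ s ∈ {s : ℝ | HorizontallyShort (hAct s Λ)},
      ∀ s' ∈ {s : ℝ | HorizontallyShort (hAct s Λ)}, s ≠ s' → 1 ≤ |s - s'|) ∧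
    {s : ℝ | HorizontallyShort (hAct s Λ)}.Countable := by
  obtain ⟨g, hg, rfl⟩ := hΛ
  have hsep : {s : ℝ | HorizontallyShort (hAct s (latticeOf g))}.Pairwise
      fun s s' => 1 ≤ |s - s'| := fun s hs s' hs' hne => by
    simpa [hg] using abs_det_le_abs_sub_of_horizontallyShort hs hs' hne
  obtain ⟨v, hv, hv0, hv1⟩ :=
    exists_mem_latticeOf_pos_le_one (by simp [hg]) (by simp [hg]) hvert
  have hhit : HorizontallyShort (hAct (v 1 / v 0) (latticeOf g)) :=
    (horizontallyShort_hAct_iff _ _).mpr ⟨v, hv, hv0, hv1, by field_simp⟩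
  exact ⟨⟨_, hhit⟩, hsep, Set.Countable.of_pairwise_le_abs_sub one_pos hsep⟩
end
end

section
/- Let Q ≥ 1 be an integer and let γ_i = p_i/q_i (in lowest terms) denote the elements of the Farey sequence F(Q), with the convention γ_{N+1} = 1/1, q_{N+1} = 1, where N = N(Q). Then for every 1 ≤ i ≤ N−1 one has T(q_i/Q, q_{i+1}/Q) = (q_{i+1}/Q, q_{i+2}/Q) and R(q_i/Q, q_{i+1}/Q) = Q²·(γ_{i+1} − γ_i). Consequently the point (1/Q, 1) ∈ Ω is T-periodic with minimal period N(Q), and Σ_{n=0}^{N(Q)−1} R(T^n(1/Q, 1)) = Q². -/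
open MeasureTheory

noncomputable section

/-- The BCZ map `T(a,b) = (b, -a + ⌊(1+a)/b⌋ b)`. -/
def bcz (p : ℝ × ℝ) : ℝ × ℝ :=
  (p.2, -p.1 + (⌊(1 + p.1) / p.2⌋ : ℝ) * p.2)

/-- The roof function `R(a,b) = 1/(ab)`. -/
def Rfun (p : ℝ × ℝ) : ℝ := 1 / (p.1 * p.2)

/-- The set of Farey fractions of level `Q`: rationals `p/q ∈ [0,1)` in lowest
terms with denominator `q ≤ Q`. -/
def fareySet (Q : ℕ) : Set ℚ := {x | 0 ≤ x ∧ x < 1 ∧ x.den ≤ Q}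

/-- `N(Q) = ∑_{q ≤ Q} φ(q)`, the cardinality of the Farey sequence `F(Q)`. -/
def NFarey (Q : ℕ) : ℕ := ∑ q ∈ Finset.Icc 1 Q, Nat.totient q

/-! Consecutive fractions `a < b` of `F(Q) ∪ {1}` are Farey neighbours:
`b.num * a.den - a.num * b.den = 1` and `a.den + b.den > Q`. Indeed, the Bezout solution `p'/q'` with
`q' ∈ (Q - a.den, Q]` must be the successor of `a`, because every fraction strictly between two
neighbours `a < b` has denominator at least `a.den + b.den`. For three consecutive fractions the
middle denominator then divides the sum of the outer ones, which forces the next denominator to be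
`⌊(Q + q_{i-1}) / q_i⌋ q_i - q_{i-1}`: this is the BCZ map acting on `(q_{i-1}/Q, q_i/Q)`.
So the orbit of `(1/Q, 1)` walks through the consecutive Farey denominators, comes back after `N`
steps and not before (`q = 1` only at `γ₁ = 0`), and `R = Q² (γ_{i+1} - γ_i)` telescopes to `Q²`. -/

def crossDet (a b : ℚ) : ℤ := b.num * a.den - a.num * b.den

lemma sub_mul_den_mul_den (a b : ℚ) : (b - a) * (a.den * b.den) = crossDet a b := by
  have ha := Rat.mul_den_eq_num a
  have hb := Rat.mul_den_eq_num b
  unfold crossDet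
  push_cast
  linear_combination (a.den : ℚ) * hb - (b.den : ℚ) * ha

lemma sub_eq_crossDet_div {K : Type*} [Field K] [CharZero K] (a b : ℚ) :
    (b : K) - a = crossDet a b / (a.den * b.den) := by
  rw [eq_div_iff (by simp)]
  exact_mod_cast sub_mul_den_mul_den a b

lemma crossDet_pos_iff {a b : ℚ} : 0 < crossDet a b ↔ a < b := by
  rw [← Int.cast_pos (R := ℚ), ← sub_mul_den_mul_den, mul_pos_iff_of_pos_right (by positivity),
    sub_pos]

lemma den_mul_crossDet (a b c : ℚ) :
    (c.den : ℤ) * crossDet a b = b.den * crossDet a c + a.den * crossDet c b := by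
  unfold crossDet
  ring

lemma den_add_den_le_of_lt_of_lt {a b c : ℚ} (h : crossDet a b = 1) (hac : a < c)
    (hcb : c < b) : a.den + b.den ≤ c.den := by
  have hdet := den_mul_crossDet a b c
  have hac' := crossDet_pos_iff.mpr hac
  have hcb' := crossDet_pos_iff.mpr hcb
  rw [h, mul_one] at hdet
  have : (a.den : ℤ) + b.den ≤ c.den := by nlinarith
  exact_mod_cast this

lemma den_dvd_den_add_den {a b c : ℚ} (h : crossDet a b = crossDet b c) :
    b.den ∣ a.den + c.den := by
  have hmul : (b.den : ℤ) ∣ b.num * (a.den + c.den) :=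
    ⟨a.num + c.num, by unfold crossDet at h; linarith⟩
  exact_mod_cast b.isCoprime_num_den.symm.dvd_of_dvd_mul_left hmul

lemma exists_mul_sub_mul_eq_one {p q : ℤ} (Q : ℤ) (hq : 0 < q) (hpq : IsCoprime p q) :
    ∃ p' q' : ℤ, p' * q - p * q' = 1 ∧ Q - q < q' ∧ q' ≤ Q := by
  obtain ⟨u, v, huv⟩ := hpq
  have hmod := Int.emod_nonneg (Q + u) hq.ne'
  have hmod' := Int.emod_lt_of_pos (Q + u) hq
  refine ⟨v + p * ((Q + u) / q), Q - (Q + u) % q, ?_, by omega, by omega⟩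
  rw [Int.emod_def]
  linear_combination huv

lemma mem_insert_one_fareySet {Q : ℕ} {x : ℚ} (h0 : 0 ≤ x) (h1 : x ≤ 1) (hQ : x.den ≤ Q) :
    x ∈ insert 1 (fareySet Q) :=
  h1.eq_or_lt.imp id fun h => ⟨h0, h, hQ⟩

lemma den_le_of_mem_insert_one_fareySet {Q : ℕ} (hQ : 1 ≤ Q) {x : ℚ}
    (hx : x ∈ insert 1 (fareySet Q)) : x.den ≤ Q := by
  rcases hx with rfl | hx
  · exact hQ
  · exact hx.2.2

lemma eq_zero_of_mem_fareySet_of_den_eq_one {Q : ℕ} {x : ℚ} (hx : x ∈ fareySet Q)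
    (hden : x.den = 1) : x = 0 := by
  have h0 := Rat.num_nonneg.mpr hx.1
  have h1 := Rat.num_lt_denom_iff.mpr hx.2.1
  rw [hden] at h1
  rw [← Rat.num_div_den x, hden, show x.num = 0 by omega]
  simp

lemma exists_crossDet_eq_one {Q : ℕ} {a : ℚ} (ha : a ∈ fareySet Q) :
    ∃ b ∈ insert 1 (fareySet Q), crossDet a b = 1 ∧ Q < a.den + b.den := by
  obtain ⟨p, q, hpq, hlo, hhi⟩ :=
    exists_mul_sub_mul_eq_one Q (by exact_mod_cast a.pos) a.isCoprime_num_den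
  have haQ : a.den ≤ Q := ha.2.2
  have hq : 0 < q := by omega
  have hcop : Nat.Coprime p.natAbs q.natAbs :=
    Int.isCoprime_iff_gcd_eq_one.mp ⟨a.den, -a.num, by linear_combination hpq⟩
  have hnum := Rat.num_div_eq_of_coprime hq hcop
  have hden := Rat.den_div_eq_of_coprime hq hcop
  have hdet : crossDet a (p / q) = 1 := by
    unfold crossDet
    rw [hnum, hden]
    linarith
  have hp : p ≤ q := by
    have := Rat.num_lt_denom_iff.mpr ha.2.1
    nlinarith
  refine ⟨p / q, mem_insert_one_fareySet ?_ ?_ ?_, hdet, by omega⟩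
  · exact ha.1.trans (crossDet_pos_iff.mp (by omega)).le
  · exact div_le_one_of_le₀ (by exact_mod_cast hp) (by positivity)
  · omega

lemma crossDet_eq_one_of_isLeast {Q : ℕ} (hQ : 1 ≤ Q) {a b : ℚ} (ha : a ∈ fareySet Q)
    (hb : IsLeast {c | c ∈ insert 1 (fareySet Q) ∧ a < c} b) :
    crossDet a b = 1 ∧ Q < a.den + b.den := by
  obtain ⟨b', hb', hdet, hQlt⟩ := exists_crossDet_eq_one ha
  have hab' : a < b' := crossDet_pos_iff.mp (by omega)
  obtain rfl : b = b' := by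
    refine le_antisymm (hb.2 ⟨hb', hab'⟩) (not_lt.mp fun hlt => ?_)
    have := den_add_den_le_of_lt_of_lt hdet hb.1.2 hlt
    have := den_le_of_mem_insert_one_fareySet hQ hb.1.1
    omega
  exact ⟨hdet, hQlt⟩

lemma bcz_div (a b Q : ℝ) (hQ : Q ≠ 0) :
    bcz (a / Q, b / Q) = (b / Q, (⌊(Q + a) / b⌋ * b - a) / Q) := by
  have harg : (1 + a / Q) / (b / Q) = (Q + a) / b := by
    rw [one_add_div hQ, div_div_div_cancel_right₀ hQ]
  simp only [bcz, harg, Prod.mk.injEq, true_and]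
  ring

lemma bcz_natCast_div_of_dvd {Q a b c : ℕ} (hQ : 0 < Q) (hdvd : b ∣ a + c) (hcQ : c ≤ Q)
    (hQbc : Q < b + c) : bcz ((a : ℝ) / Q, (b : ℝ) / Q) = ((b : ℝ) / Q, (c : ℝ) / Q) := by
  obtain ⟨k, hk⟩ := hdvd
  have hb : (0 : ℝ) < b := by exact_mod_cast (show 0 < b by omega)
  have hk' : (a : ℝ) + c = b * k := by exact_mod_cast hk
  have hfloor : ⌊((Q : ℝ) + a) / b⌋ = k := by
    rw [Int.floor_eq_iff, le_div_iff₀ hb, div_lt_iff₀ hb]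
    have hcQ' : (c : ℝ) ≤ Q := by exact_mod_cast hcQ
    have hQbc' : (Q : ℝ) < b + c := by exact_mod_cast hQbc
    push_cast
    constructor <;> linarith
  rw [bcz_div _ _ _ (by positivity), hfloor]
  congr 2
  push_cast
  linarith

lemma rfun_den_div {a b : ℚ} {Q : ℕ} (hQ : 0 < Q) (h : crossDet a b = 1) :
    Rfun ((a.den : ℝ) / Q, (b.den : ℝ) / Q) = (Q : ℝ) ^ 2 * ((b : ℝ) - a) := by
  rw [sub_eq_crossDet_div, h, Rfun]
  field_simp
  simp

structure IsFareyEnumeration (Q N : ℕ) (γ : ℕ → ℚ) : Prop where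
  strictMonoOn : StrictMonoOn γ (Set.Icc 1 (N + 1))
  image_Icc : γ '' Set.Icc 1 N = fareySet Q
  apply_add_one : γ (N + 1) = 1

namespace IsFareyEnumeration

variable {Q N : ℕ} {γ : ℕ → ℚ}

lemma mem_fareySet (hγ : IsFareyEnumeration Q N γ) {i : ℕ} (h1 : 1 ≤ i) (hi : i ≤ N) :
    γ i ∈ fareySet Q :=
  hγ.image_Icc ▸ Set.mem_image_of_mem γ ⟨h1, hi⟩

lemma image_Icc_add_one (hγ : IsFareyEnumeration Q N γ) :
    γ '' Set.Icc 1 (N + 1) = insert 1 (fareySet Q) := by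
  rw [← Set.insert_Icc_right_eq_Icc_add_one (by omega), Set.image_insert_eq, hγ.image_Icc,
    hγ.apply_add_one]

lemma den_le (hγ : IsFareyEnumeration Q N γ) (hQ : 1 ≤ Q) {i : ℕ} (h1 : 1 ≤ i) (hi : i ≤ N + 1) :
    (γ i).den ≤ Q :=
  den_le_of_mem_insert_one_fareySet hQ (hγ.image_Icc_add_one ▸ Set.mem_image_of_mem γ ⟨h1, hi⟩)

lemma isLeast_apply_add_one (hγ : IsFareyEnumeration Q N γ) {i : ℕ} (h1 : 1 ≤ i) (hi : i ≤ N) :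
    IsLeast {c | c ∈ insert 1 (fareySet Q) ∧ γ i < c} (γ (i + 1)) := by
  have hmem : ∀ {j}, 1 ≤ j → j ≤ N + 1 → j ∈ Set.Icc 1 (N + 1) := fun h1 h2 => ⟨h1, h2⟩
  refine ⟨⟨hγ.image_Icc_add_one ▸ Set.mem_image_of_mem γ (hmem (by omega) (by omega)),
    hγ.strictMonoOn (hmem h1 (by omega)) (hmem (by omega) (by omega)) (by omega)⟩, ?_⟩
  rintro _ ⟨hc, hlt⟩
  obtain ⟨j, hj, rfl⟩ := hγ.image_Icc_add_one.symm ▸ hc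
  have hij := (hγ.strictMonoOn.lt_iff_lt (hmem h1 (by omega)) hj).mp hlt
  exact (hγ.strictMonoOn.le_iff_le (hmem (by omega) (by omega)) hj).mpr hij

lemma crossDet_eq_one (hγ : IsFareyEnumeration Q N γ) (hQ : 1 ≤ Q) {i : ℕ} (h1 : 1 ≤ i)
    (hi : i ≤ N) : crossDet (γ i) (γ (i + 1)) = 1 ∧ Q < (γ i).den + (γ (i + 1)).den :=
  crossDet_eq_one_of_isLeast hQ (hγ.mem_fareySet h1 hi) (hγ.isLeast_apply_add_one h1 hi)

lemma exists_eq_zero (hγ : IsFareyEnumeration Q N γ) (hQ : 1 ≤ Q) :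
    ∃ j ∈ Set.Icc 1 N, γ j = 0 := by
  have h0 : (0 : ℚ) ∈ fareySet Q := ⟨le_rfl, zero_lt_one, by simpa using hQ⟩
  rw [← hγ.image_Icc] at h0
  exact h0

lemma one_le (hγ : IsFareyEnumeration Q N γ) (hQ : 1 ≤ Q) : 1 ≤ N := by
  obtain ⟨j, hj, -⟩ := hγ.exists_eq_zero hQ
  exact hj.1.trans hj.2

lemma apply_one (hγ : IsFareyEnumeration Q N γ) (hQ : 1 ≤ Q) : γ 1 = 0 := by
  obtain ⟨j, ⟨hj1, hjN⟩, hj0⟩ := hγ.exists_eq_zero hQ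
  have hle : γ 1 ≤ γ j :=
    (hγ.strictMonoOn.le_iff_le ⟨le_rfl, by omega⟩ ⟨hj1, by omega⟩).mpr hj1
  exact le_antisymm (hj0 ▸ hle) (hγ.mem_fareySet le_rfl (hj1.trans hjN)).1

lemma den_apply_two (hγ : IsFareyEnumeration Q N γ) (hQ : 1 ≤ Q) : (γ 2).den = Q := by
  have hN := hγ.one_le hQ
  have hlt : Q < 1 + (γ 2).den := by
    simpa [hγ.apply_one hQ] using (hγ.crossDet_eq_one hQ le_rfl hN).2
  have hle := hγ.den_le hQ (i := 2) (by omega) (by omega)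
  omega

lemma den_apply_last (hγ : IsFareyEnumeration Q N γ) (hQ : 1 ≤ Q) : (γ N).den = Q := by
  have hN := hγ.one_le hQ
  have hlt := (hγ.crossDet_eq_one hQ hN le_rfl).2
  have hle := hγ.den_le hQ hN (by omega)
  rw [hγ.apply_add_one, Rat.den_one] at hlt
  omega

lemma bcz_den_div (hγ : IsFareyEnumeration Q N γ) (hQ : 1 ≤ Q) {i : ℕ} (h1 : 1 ≤ i)
    (hi : i + 1 ≤ N) :
    bcz (((γ i).den : ℝ) / Q, ((γ (i + 1)).den : ℝ) / Q)
      = (((γ (i + 1)).den : ℝ) / Q, ((γ (i + 2)).den : ℝ) / Q) := by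
  obtain ⟨hdet, -⟩ := hγ.crossDet_eq_one hQ h1 (by omega)
  obtain ⟨hdet', hlt⟩ := hγ.crossDet_eq_one hQ (i := i + 1) (by omega) hi
  exact bcz_natCast_div_of_dvd hQ (den_dvd_den_add_den (hdet.trans hdet'.symm))
    (hγ.den_le hQ (by omega) (by omega)) hlt

lemma iterate_bcz (hγ : IsFareyEnumeration Q N γ) (hQ : 1 ≤ Q) {n : ℕ} (hn : n + 1 ≤ N) :
    bcz^[n] (1 / (Q : ℝ), 1)
      = (((γ (n + 1)).den : ℝ) / Q, ((γ (n + 2)).den : ℝ) / Q) := by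
  induction n with
  | zero =>
    have hQ' : (Q : ℝ) ≠ 0 := by positivity
    simp [hγ.apply_one hQ, hγ.den_apply_two hQ, hQ']
  | succ n ih =>
    rw [Function.iterate_succ_apply', ih (by omega)]
    exact hγ.bcz_den_div hQ (by omega) hn

lemma isPeriodicPt_bcz (hγ : IsFareyEnumeration Q N γ) (hQ : 1 ≤ Q) :
    Function.IsPeriodicPt bcz N (1 / (Q : ℝ), 1) := by
  have hN := hγ.one_le hQ
  have hQ' : (Q : ℝ) ≠ 0 := by positivity
  obtain ⟨n, rfl⟩ : ∃ n, N = n + 1 := ⟨N - 1, by omega⟩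
  have hreturn : bcz ((Q : ℝ) / Q, (1 : ℝ) / Q) = ((1 : ℝ) / Q, (Q : ℝ) / Q) := by
    exact_mod_cast bcz_natCast_div_of_dvd (a := Q) (b := 1) (c := Q) hQ (one_dvd _) le_rfl
      (by omega)
  rw [Function.IsPeriodicPt, Function.IsFixedPt, Function.iterate_succ_apply',
    hγ.iterate_bcz hQ le_rfl, hγ.den_apply_last hQ, hγ.apply_add_one, Rat.den_one, Nat.cast_one,
    hreturn, div_self hQ']

lemma minimalPeriod_bcz (hγ : IsFareyEnumeration Q N γ) (hQ : 1 ≤ Q) :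
    Function.minimalPeriod bcz (1 / (Q : ℝ), 1) = N := by
  have hN := hγ.one_le hQ
  have hper := hγ.isPeriodicPt_bcz hQ
  refine le_antisymm (hper.minimalPeriod_le hN) (not_lt.mp fun hlt => ?_)
  set m := Function.minimalPeriod bcz (1 / (Q : ℝ), 1)
  have hm := hper.minimalPeriod_pos hN
  have hfst := congrArg Prod.fst
    ((Function.isPeriodicPt_minimalPeriod bcz _).eq.symm.trans (hγ.iterate_bcz hQ hlt))
  have hden : (γ (m + 1)).den = 1 := by
    have hQ' : (Q : ℝ) ≠ 0 := by positivity
    have hden' : ((γ (m + 1)).den : ℝ) = 1 := ((div_left_inj' hQ').mp hfst).symm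
    exact_mod_cast hden'
  have hzero := eq_zero_of_mem_fareySet_of_den_eq_one (hγ.mem_fareySet (by omega) hlt) hden
  have := hγ.strictMonoOn.injOn ⟨le_rfl, by omega⟩ ⟨by omega, by omega⟩
    ((hγ.apply_one hQ).trans hzero.symm)
  omega

lemma sum_rfun_iterate_bcz (hγ : IsFareyEnumeration Q N γ) (hQ : 1 ≤ Q) :
    ∑ n ∈ Finset.range N, Rfun (bcz^[n] (1 / (Q : ℝ), 1)) = (Q : ℝ) ^ 2 := by
  have hterm : ∀ n ∈ Finset.range N,
      Rfun (bcz^[n] (1 / (Q : ℝ), 1)) = (Q : ℝ) ^ 2 * ((γ (n + 2) : ℝ) - γ (n + 1)) := by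
    intro n hn
    have hn := Finset.mem_range.mp hn
    rw [hγ.iterate_bcz hQ hn]
    exact rfun_den_div hQ (hγ.crossDet_eq_one hQ (by omega) hn).1
  rw [Finset.sum_congr rfl hterm, ← Finset.mul_sum,
    Finset.sum_range_sub (fun n => (γ (n + 1) : ℝ)), hγ.apply_add_one, hγ.apply_one hQ]
  simp

end IsFareyEnumeration

theorem bcz_farey_orbit (Q : ℕ) (hQ : 1 ≤ Q) (γ : ℕ → ℚ)
    (hmono : StrictMonoOn γ (Set.Icc 1 (NFarey Q + 1)))
    (hrange : γ '' Set.Icc 1 (NFarey Q) = fareySet Q)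
    (hlast : γ (NFarey Q + 1) = 1) :
    (∀ i : ℕ, 1 ≤ i → i ≤ NFarey Q - 1 →
      bcz (((γ i).den : ℝ) / Q, ((γ (i + 1)).den : ℝ) / Q)
          = (((γ (i + 1)).den : ℝ) / Q, ((γ (i + 2)).den : ℝ) / Q) ∧
      Rfun (((γ i).den : ℝ) / Q, ((γ (i + 1)).den : ℝ) / Q)
          = (Q : ℝ) ^ 2 * ((γ (i + 1) : ℝ) - (γ i : ℝ))) ∧
    Function.IsPeriodicPt bcz (NFarey Q) (1 / (Q : ℝ), 1) ∧
    Function.minimalPeriod bcz (1 / (Q : ℝ), 1) = NFarey Q ∧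
    ∑ n ∈ Finset.range (NFarey Q), Rfun (bcz^[n] (1 / (Q : ℝ), 1)) = (Q : ℝ) ^ 2 := by
  have hγ : IsFareyEnumeration Q (NFarey Q) γ := ⟨hmono, hrange, hlast⟩
  refine ⟨fun i h1 hi => ⟨hγ.bcz_den_div hQ h1 (by omega), ?_⟩, hγ.isPeriodicPt_bcz hQ,
    hγ.minimalPeriod_bcz hQ, hγ.sum_rfun_iterate_bcz hQ⟩
  exact rfun_den_div hQ (hγ.crossDet_eq_one hQ h1 (by omega)).1
end
end

section
/- A point (a,b) ∈ Ω is T-periodic if and only if its slope b/a is rational. In particular, the set of T-periodic points is dense in Ω. -/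
noncomputable section

/-!
On the Farey triangle `T = bcz` is injective, being undone by `swap ∘ T ∘ swap`, and it preserves
every lattice `G × G` with `G` an additive subgroup of `ℝ`. A point `(a, b)` with `b / a = m / d`
lies in the lattice `G = ℤ (a / d)`, which meets the bounded triangle in a finite set, so its orbit
is periodic.

Conversely, along the orbit `(aₙ, bₙ) = Tⁿ(a, b)` the integer continuants `(βₙ, βₙ₊₁)` obey the
same determinant-one recursion, started at `(0, 1)`, so `aₙ βₙ₊₁ - bₙ βₙ = a` for all `n`. Hence
`βₙ / aₙ` is strictly increasing from `0`, so `βₙ > 0` for `n > 0`, and `Tⁿ(a, b) = (a, b)` gives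
`b / a = (βₙ₊₁ - 1) / βₙ`. Density: move `b` down to a nearby rational multiple of `a`.
-/

open Function Set

theorem Set.MapsTo.mem_periodicPts_of_injOn {α : Type*} {f : α → α} {s : Set α}
    (hf : MapsTo f s s) (hinj : InjOn f s) (hs : s.Finite) {x : α} (hx : x ∈ s) :
    x ∈ periodicPts f := by
  have : Finite s := hs
  obtain ⟨n, hn, hper⟩ := ((hf.restrict_inj).2 hinj).mem_periodicPts ⟨x, hx⟩
  refine mk_mem_periodicPts hn ?_
  simpa [IsPeriodicPt, IsFixedPt, hf.coe_iterate_restrict] using congrArg Subtype.val hper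

lemma FareyTriangle.finite_inter_prod (G : AddSubgroup ℝ) [DiscreteTopology G] :
    (FareyTriangle ∩ (G : Set ℝ) ×ˢ (G : Set ℝ)).Finite := by
  have hG : (Ioc (0 : ℝ) 1 ∩ G).Finite :=
    Metric.finite_isBounded_inter_isClosed (SetLike.isDiscrete_iff_discreteTopology.2 ‹_›)
      (Metric.isBounded_Ioc 0 1) G.isClosed_of_discrete
  refine (hG.prod hG).subset ?_
  rintro p ⟨⟨ha, ha1, hb, hb1, -⟩, hpa, hpb⟩
  exact ⟨⟨⟨ha, ha1⟩, hpa⟩, ⟨hb, hb1⟩, hpb⟩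

namespace bcz

lemma snd_mem_Ioc {p : ℝ × ℝ} (hp : p ∈ FareyTriangle) :
    (bcz p).2 ∈ Ioc (1 - p.2) 1 := by
  obtain ⟨-, -, hb, -, -⟩ := hp
  have hlo := Int.floor_le ((1 + p.1) / p.2)
  have hhi := Int.lt_floor_add_one ((1 + p.1) / p.2)
  rw [le_div_iff₀ hb] at hlo
  rw [div_lt_iff₀ hb] at hhi
  constructor <;> simp only [bcz] <;> linarith

lemma mapsTo : MapsTo bcz FareyTriangle FareyTriangle := by
  intro p hp
  obtain ⟨hlo, hhi⟩ := snd_mem_Ioc hp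
  obtain ⟨-, -, hb, hb1, -⟩ := hp
  exact ⟨hb, hb1, by linarith, hhi, show 1 < p.2 + (bcz p).2 by linarith⟩

lemma leftInvOn_swap :
    LeftInvOn (Prod.swap ∘ bcz ∘ Prod.swap) bcz FareyTriangle := by
  intro p hp
  obtain ⟨-, ha1, hb, -, hab⟩ := hp
  set k := ⌊(1 + p.1) / p.2⌋
  have hk : ⌊(1 + (-p.1 + k * p.2)) / p.2⌋ = k := by
    have hsplit : (1 + (-p.1 + k * p.2)) / p.2 = (1 - p.1) / p.2 + k := by
      field_simp; ring
    rw [hsplit, Int.floor_add_intCast, add_eq_right, Int.floor_eq_zero_iff]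
    constructor
    · exact div_nonneg (by linarith) hb.le
    · rw [div_lt_one hb]; linarith
  ext
  · simp only [comp_apply, bcz, Prod.fst_swap, Prod.snd_swap]
    rw [hk]; ring
  · rfl

lemma injOn : InjOn bcz FareyTriangle :=
  leftInvOn_swap.injOn

lemma mapsTo_prod (G : AddSubgroup ℝ) :
    MapsTo bcz ((G : Set ℝ) ×ˢ (G : Set ℝ)) ((G : Set ℝ) ×ˢ (G : Set ℝ)) := by
  rintro p ⟨ha, hb⟩
  refine ⟨hb, G.add_mem (G.neg_mem ha) ?_⟩
  rw [← zsmul_eq_mul]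
  exact G.zsmul_mem hb _

lemma mem_periodicPts_of_slope_eq_rat {p : ℝ × ℝ} (hp : p ∈ FareyTriangle) {r : ℚ}
    (hr : p.2 / p.1 = r) : p ∈ periodicPts bcz := by
  have ha : p.1 ≠ 0 := hp.1.ne'
  have hden : (r.den : ℝ) ≠ 0 := by positivity
  set G := AddSubgroup.zmultiples (p.1 / r.den)
  have hpG : p ∈ (G : Set ℝ) ×ˢ (G : Set ℝ) := by
    constructor <;> rw [SetLike.mem_coe, AddSubgroup.mem_zmultiples_iff]
    · exact ⟨r.den, by rw [zsmul_eq_mul]; push_cast; field_simp⟩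
    · refine ⟨r.num, ?_⟩
      rw [div_eq_iff ha, Rat.cast_def] at hr
      rw [zsmul_eq_mul, hr]; field_simp
  exact (mapsTo.inter_inter (mapsTo_prod G)).mem_periodicPts_of_injOn
    (injOn.mono inter_subset_left) (FareyTriangle.finite_inter_prod G) ⟨hp, hpG⟩

def continuant (p : ℝ × ℝ) : ℕ → ℤ × ℤ
  | 0 => (0, 1)
  | n + 1 => ((continuant p n).2,
      -(continuant p n).1 + ⌊(1 + (bcz^[n] p).1) / (bcz^[n] p).2⌋ * (continuant p n).2)

lemma det_iterate_continuant (p : ℝ × ℝ) (n : ℕ) :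
    (bcz^[n] p).1 * (continuant p n).2 - (bcz^[n] p).2 * (continuant p n).1 = p.1 := by
  induction n with
  | zero => simp [continuant]
  | succ n ih =>
    rw [iterate_succ_apply']
    simp only [bcz, continuant]
    push_cast
    linear_combination ih

lemma continuant_fst_div_lt {p : ℝ × ℝ} (hp : p ∈ FareyTriangle) (n : ℕ) :
    ((continuant p n).1 : ℝ) / (bcz^[n] p).1 <
      (continuant p (n + 1)).1 / (bcz^[n + 1] p).1 := by
  obtain ⟨hx, -, hy, -, -⟩ := mapsTo.iterate n hp
  rw [iterate_succ_apply']
  simp only [continuant, bcz]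
  rw [div_lt_div_iff₀ hx hy]
  linarith [det_iterate_continuant p n, hp.1]

lemma continuant_fst_pos {p : ℝ × ℝ} (hp : p ∈ FareyTriangle) {n : ℕ} (hn : 0 < n) :
    0 < (continuant p n).1 := by
  have hlt := strictMono_nat_of_lt_succ (continuant_fst_div_lt hp) hn
  simp only [continuant, Int.cast_zero, zero_div] at hlt
  exact_mod_cast (div_pos_iff_of_pos_right (mapsTo.iterate n hp).1).1 hlt

lemma exists_slope_eq_rat_of_isPeriodicPt {p : ℝ × ℝ} (hp : p ∈ FareyTriangle) {n : ℕ}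
    (hn : 0 < n) (hper : IsPeriodicPt bcz n p) : ∃ r : ℚ, p.2 / p.1 = r := by
  have hdet := det_iterate_continuant p n
  rw [hper.eq] at hdet
  have hB : (0 : ℝ) < (continuant p n).1 := by exact_mod_cast continuant_fst_pos hp hn
  refine ⟨((continuant p n).2 - 1) / (continuant p n).1, ?_⟩
  push_cast
  rw [div_eq_div_iff hp.1.ne' hB.ne']
  linear_combination -hdet

end bcz

lemma FareyTriangle.subset_closure_slope_rat :
    FareyTriangle ⊆ closure {p ∈ FareyTriangle | ∃ r : ℚ, p.2 / p.1 = r} := by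
  rintro p ⟨ha, ha1, -, hb1, hab⟩
  rw [Metric.mem_closure_iff]
  intro ε hε
  obtain ⟨r, hr_lo, hr_hi⟩ :=
    exists_rat_btwn (x := max (p.2 - ε) (1 - p.1) / p.1) (y := p.2 / p.1) <| by
      gcongr; exact max_lt (by linarith) (by linarith)
  rw [div_lt_iff₀ ha, max_lt_iff] at hr_lo
  rw [lt_div_iff₀ ha] at hr_hi
  refine ⟨(p.1, r * p.1), ⟨⟨ha, ha1, by linarith, by linarith, by linarith⟩, r, ?_⟩, ?_⟩
  · field_simp
  · rw [Prod.dist_eq, dist_self, Real.dist_eq, abs_of_pos (by linarith)]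
    exact max_lt hε (by linarith)

theorem bcz_periodic_iff_rational_slope :
    (∀ p ∈ FareyTriangle,
      (∃ n : ℕ, 0 < n ∧ bcz^[n] p = p) ↔ ∃ r : ℚ, p.2 / p.1 = (r : ℝ)) ∧
    FareyTriangle ⊆
      closure {p ∈ FareyTriangle | ∃ n : ℕ, 0 < n ∧ bcz^[n] p = p} := by
  have periodic_iff (p : ℝ × ℝ) (hp : p ∈ FareyTriangle) :
      (∃ n : ℕ, 0 < n ∧ bcz^[n] p = p) ↔ ∃ r : ℚ, p.2 / p.1 = (r : ℝ) :=
    ⟨fun ⟨_, hn, hper⟩ => bcz.exists_slope_eq_rat_of_isPeriodicPt hp hn hper,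
      fun ⟨_, hr⟩ => bcz.mem_periodicPts_of_slope_eq_rat hp hr⟩
  refine ⟨periodic_iff, FareyTriangle.subset_closure_slope_rat.trans (closure_mono ?_)⟩
  exact fun p ⟨hp, hr⟩ => ⟨hp, (periodic_iff p hp).2 hr⟩
end
end

section
/- Let k ≤ l be coprime positive integers and let a be a real number with l/(l+k) < a ≤ 1. Then the point (a, a·k/l) ∈ Ω is T-periodic, and the matrix accumulated along its periodic orbit satisfies A_{P(a, a·k/l)}(a, a·k/l) = [[1−kl, l²],[−k², 1+kl]]. In particular this matrix has trace 2 (it is parabolic) and is independent of a in the stated range. -/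
/-!
Write `p = (a, a k / l) = s • (l, k)` with `s = a / l` and complete `(l, k)` to a matrix
`W ∈ SL(2, ℤ)`. Since `T` acts on `Ω` as `A(p)` acts on column vectors,
`T^j p = s • (u_j, u_{j+1})` where `(u_j, c_j)` is the first row of `A_j(p) W`. That the orbit
stays in `Ω` and that `det (A_j(p) W) = 1` say exactly that the fractions `c_j / u_j` are
consecutive terms of the Farey sequence of order `N = ⌊1 / s⌋`; in particular they increase.
No fraction of denominator at most `N` lies strictly between Farey neighbours, so the first time
the walk passes `c_0 / u_0 + 1` it lands on it, and from there it repeats shifted by `1`: the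
orbit closes with `A_P(p) W = W [[1, 1], [0, 1]]`. It cannot close earlier, since any return of
the denominators shifts the fractions by a positive integer. Conjugating by `W` gives the matrix.
-/

noncomputable section

/-- The matrix `A(a,b) = [[0,1],[-1,κ(a,b)]] ∈ SL(2,ℤ)`, with `κ(a,b) = ⌊(1+a)/b⌋`. -/
def Amat (p : ℝ × ℝ) : Matrix (Fin 2) (Fin 2) ℤ :=
  !![0, 1; -1, ⌊(1 + p.1) / p.2⌋]

/-- The cocycle `A_n(a,b) = A(T^{n-1}(a,b)) ⋯ A(T(a,b)) A(a,b)`. -/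
def AProd : ℕ → ℝ × ℝ → Matrix (Fin 2) (Fin 2) ℤ
  | 0, _ => 1
  | n + 1, p => Amat (bcz^[n] p) * AProd n p

theorem add_le_of_det_eq_one_of_lt_of_lt {u c u' c' x y : ℤ} (hu : 0 < u) (hu' : 0 < u')
    (hdet : c' * u - c * u' = 1) (hlt : c * y < x * u) (hlt' : x * u' < c' * y) :
    u + u' ≤ y := by
  have hy : y = u' * (x * u - c * y) + u * (c' * y - x * u') := by linear_combination -y * hdet
  nlinarith

/-- The fractions `c j / u j` are consecutive terms of the Farey sequence of order `N`, continued
past `1` by integer translations. -/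
structure IsFareyChain (N : ℤ) (u c : ℕ → ℤ) : Prop where
  pos : ∀ j, 0 < u j
  le : ∀ j, u j ≤ N
  lt_add : ∀ j, N < u j + u (j + 1)
  det : ∀ j, c (j + 1) * u j - c j * u (j + 1) = 1

namespace IsFareyChain

variable {N : ℤ} {u c : ℕ → ℤ}

theorem isCoprime (h : IsFareyChain N u c) (j : ℕ) : IsCoprime (c j) (u j) :=
  ⟨-u (j + 1), c (j + 1), by linear_combination h.det j⟩

theorem isCoprime_succ (h : IsFareyChain N u c) (j : ℕ) : IsCoprime (u j) (u (j + 1)) :=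
  ⟨c (j + 1), -c j, by linear_combination h.det j⟩

theorem frac_succ (h : IsFareyChain N u c) (j : ℕ) :
    (c (j + 1) : ℚ) / u (j + 1) = c j / u j + 1 / (u j * u (j + 1)) := by
  have h₀ : (u j : ℚ) ≠ 0 := by exact_mod_cast (h.pos j).ne'
  have h₁ : (u (j + 1) : ℚ) ≠ 0 := by exact_mod_cast (h.pos (j + 1)).ne'
  have hdet : (c (j + 1) : ℚ) * u j - c j * u (j + 1) = 1 := by exact_mod_cast h.det j
  field_simp
  linear_combination hdet

theorem strictMono_frac (h : IsFareyChain N u c) : StrictMono fun j ↦ (c j : ℚ) / u j := by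
  refine strictMono_nat_of_lt_succ fun j ↦ ?_
  have := h.pos j
  have := h.pos (j + 1)
  rw [h.frac_succ]
  exact lt_add_of_pos_right _ (by positivity)

theorem frac_zero_add_le (h : IsFareyChain N u c) (j : ℕ) :
    (c 0 : ℚ) / u 0 + j / N ^ 2 ≤ c j / u j := by
  induction j with
  | zero => simp
  | succ j ih =>
    have h₀ : (0 : ℚ) < u j := by exact_mod_cast h.pos j
    have h₁ : (0 : ℚ) < u (j + 1) := by exact_mod_cast h.pos (j + 1)
    have hprod : (u j : ℚ) * u (j + 1) ≤ N ^ 2 := by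
      rw [sq]
      exact mul_le_mul (by exact_mod_cast h.le j) (by exact_mod_cast h.le (j + 1)) h₁.le
        (h₀.le.trans (by exact_mod_cast h.le j))
    have hstep : 1 / (N : ℚ) ^ 2 ≤ 1 / (u j * u (j + 1)) :=
      one_div_le_one_div_of_le (by positivity) hprod
    rw [h.frac_succ]
    push_cast
    linarith [add_div (j : ℚ) 1 (N ^ 2)]

theorem exists_frac_lt_le (h : IsFareyChain N u c) {x : ℚ} (hx : c 0 / u 0 < x) :
    ∃ n, (c n : ℚ) / u n < x ∧ x ≤ c (n + 1) / u (n + 1) := by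
  by_contra! hcross
  have hlt : ∀ n, (c n : ℚ) / u n < x := fun n ↦ Nat.rec hx hcross n
  have hN : (0 : ℚ) < N := by exact_mod_cast (h.pos 0).trans_le (h.le 0)
  obtain ⟨j, hj⟩ := exists_nat_ge ((x - c 0 / u 0) * N ^ 2)
  have hx' : x ≤ c 0 / u 0 + j / N ^ 2 := by
    rw [← sub_le_iff_le_add', le_div_iff₀ (by positivity)]
    exact hj
  exact (hlt j).not_ge (hx'.trans (h.frac_zero_add_le j))

theorem frac_succ_eq_of_lt_of_le (h : IsFareyChain N u c) {j : ℕ} {x y : ℤ} (hy : 0 < y)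
    (hyN : y ≤ N) (hlt : (c j : ℚ) / u j < x / y)
    (hle : (x : ℚ) / y ≤ c (j + 1) / u (j + 1)) :
    (c (j + 1) : ℚ) / u (j + 1) = x / y := by
  refine (hle.lt_or_eq.resolve_left fun hlt' ↦ ?_).symm
  have h₀ := h.pos j
  have h₁ := h.pos (j + 1)
  rw [div_lt_div_iff₀ (by exact_mod_cast h₀) (by exact_mod_cast hy)] at hlt
  rw [div_lt_div_iff₀ (by exact_mod_cast hy) (by exact_mod_cast h₁)] at hlt'
  have := add_le_of_det_eq_one_of_lt_of_lt h₀ h₁ (h.det j) (by exact_mod_cast hlt)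
    (by exact_mod_cast hlt')
  linarith [h.lt_add j]

theorem eq_of_frac_eq (h : IsFareyChain N u c) {j : ℕ} {x y : ℤ} (hy : 0 < y)
    (hxy : IsCoprime x y) (he : (c j : ℚ) / u j = x / y) : c j = x ∧ u j = y :=
  Rat.div_int_inj (h.pos j) hy (Int.isCoprime_iff_gcd_eq_one.mp (h.isCoprime j))
    (Int.isCoprime_iff_gcd_eq_one.mp hxy) he

theorem succ_eq_of_det_eq_one (h : IsFareyChain N u c) {j : ℕ} {x y : ℤ} (hyN : y ≤ N)
    (hlt : N < u j + y)
    (hdet : x * u j - c j * y = 1) : u (j + 1) = y ∧ c (j + 1) = x := by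
  have hkey : u j * (c (j + 1) - x) = c j * (u (j + 1) - y) := by
    linear_combination h.det j - hdet
  have hdvd : u j ∣ u (j + 1) - y := (h.isCoprime j).symm.dvd_of_dvd_mul_left ⟨_, hkey.symm⟩
  have habs : |u (j + 1) - y| < u j := by
    rw [abs_lt]
    constructor <;> linarith [h.le (j + 1), h.lt_add j]
  have hu : u (j + 1) = y := by linarith [Int.eq_zero_of_abs_lt_dvd hdvd habs]
  refine ⟨hu, ?_⟩
  rw [hu, sub_self, mul_zero] at hkey
  linarith [(mul_eq_zero.mp hkey).resolve_left (h.pos j).ne']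

theorem return_of_frac_lt_le (h : IsFareyChain N u c) {n : ℕ}
    (hlt : (c n : ℚ) / u n < (c 0 + u 0 : ℤ) / u 0)
    (hle : ((c 0 + u 0 : ℤ) : ℚ) / u 0 ≤ c (n + 1) / u (n + 1)) :
    u (n + 1) = u 0 ∧ c (n + 1) = c 0 + u 0 ∧ u (n + 2) = u 1 ∧ c (n + 2) = c 1 + u 1 := by
  have hdet₀ : c 1 * u 0 - c 0 * u 1 = 1 := h.det 0
  have hcop : IsCoprime (c 0 + u 0) (u 0) := ⟨-u 1, c 1 + u 1, by linear_combination hdet₀⟩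
  have hfrac := h.frac_succ_eq_of_lt_of_le (h.pos 0) (h.le 0) hlt hle
  obtain ⟨hc, hu⟩ := h.eq_of_frac_eq (h.pos 0) hcop hfrac
  obtain ⟨hu', hc'⟩ := h.succ_eq_of_det_eq_one (j := n + 1) (x := c 1 + u 1) (h.le 1)
    (hu ▸ h.lt_add 0) (by rw [hu, hc]; linear_combination hdet₀)
  exact ⟨hu, hc, hu', hc'⟩

theorem frac_zero_add_one_le (h : IsFareyChain N u c) {n : ℕ} (hn : 0 < n) (hu : u n = u 0)
    (hu' : u (n + 1) = u 1) : ((c 0 + u 0 : ℤ) : ℚ) / u 0 ≤ c n / u n := by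
  have hdet₀ : c 1 * u 0 - c 0 * u 1 = 1 := h.det 0
  have hdetₙ := h.det n
  rw [hu, hu'] at hdetₙ
  have hkey : u 0 * (c (n + 1) - c 1) = u 1 * (c n - c 0) := by
    linear_combination hdetₙ - hdet₀
  obtain ⟨e, he⟩ := (h.isCoprime_succ 0).dvd_of_dvd_mul_left ⟨_, hkey.symm⟩
  have hu₀ : (0 : ℚ) < u 0 := by exact_mod_cast h.pos 0
  have hmono : c 0 < c n := by
    have := h.strictMono_frac hn
    simp only [hu] at this
    exact_mod_cast (div_lt_div_iff_of_pos_right hu₀).mp this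
  have he₀ : 0 < e := pos_of_mul_pos_right (he ▸ sub_pos.mpr hmono) (h.pos 0).le
  rw [hu, div_le_div_iff_of_pos_right hu₀]
  exact_mod_cast (by nlinarith : c 0 + u 0 ≤ c n)

end IsFareyChain

theorem bcz_mapsTo_fareyTriangle : Set.MapsTo bcz FareyTriangle FareyTriangle := by
  rintro ⟨a, b⟩ ⟨-, -, hb, hb1, -⟩
  have hle : (⌊(1 + a) / b⌋ : ℝ) * b ≤ 1 + a := (le_div_iff₀ hb).mp (Int.floor_le _)
  have hlt : 1 + a < (⌊(1 + a) / b⌋ + 1) * b := (div_lt_iff₀ hb).mp (Int.lt_floor_add_one _)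
  refine ⟨hb, hb1, ?_, ?_, ?_⟩ <;> simp only [bcz] <;> linarith

theorem Amat_mul_apply_zero (p : ℝ × ℝ) (M : Matrix (Fin 2) (Fin 2) ℤ) (i : Fin 2) :
    (Amat p * M) 0 i = M 1 i := by
  simp [Amat, Matrix.mul_apply, Fin.sum_univ_two]

theorem Amat_mul_apply_one (p : ℝ × ℝ) (M : Matrix (Fin 2) (Fin 2) ℤ) (i : Fin 2) :
    (Amat p * M) 1 i = -M 0 i + ⌊(1 + p.1) / p.2⌋ * M 1 i := by
  simp [Amat, Matrix.mul_apply, Fin.sum_univ_two]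

theorem det_AProd (j : ℕ) (p : ℝ × ℝ) : (AProd j p).det = 1 := by
  induction j with
  | zero => exact Matrix.det_one
  | succ j ih => rw [AProd, Matrix.det_mul, ih, mul_one, Amat, Matrix.det_fin_two_of]; ring

section RationalSlope

variable {p : ℝ × ℝ} {s : ℝ} {W : Matrix (Fin 2) (Fin 2) ℤ}

theorem iterate_bcz_eq (hpW : p = (s * W 0 0, s * W 1 0)) (j : ℕ) :
    bcz^[j] p = (s * (AProd j p * W) 0 0, s * (AProd j p * W) 1 0) := by
  induction j with
  | zero => simpa [AProd] using hpW
  | succ j ih =>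
    rw [Function.iterate_succ_apply', AProd, Matrix.mul_assoc, Amat_mul_apply_zero,
      Amat_mul_apply_one, ih]
    refine Prod.ext rfl ?_
    simp only [bcz]
    push_cast
    ring

theorem int_bounds_of_mul_mem_fareyTriangle (hs : 0 < s) {x y : ℤ}
    (h : ((s * x, s * y) : ℝ × ℝ) ∈ FareyTriangle) :
    0 < x ∧ x ≤ ⌊1 / s⌋ ∧ ⌊1 / s⌋ < x + y := by
  obtain ⟨hx, hx1, -, -, hxy⟩ := h
  refine ⟨by exact_mod_cast pos_of_mul_pos_right hx hs.le, ?_, ?_⟩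
  · rw [Int.le_floor, le_div_iff₀ hs]
    linarith
  · rw [Int.floor_lt, div_lt_iff₀ hs]
    push_cast
    linarith

theorem AProd_succ_mul_apply_zero (j : ℕ) (i : Fin 2) :
    (AProd (j + 1) p * W) 0 i = (AProd j p * W) 1 i := by
  rw [AProd, Matrix.mul_assoc, Amat_mul_apply_zero]

theorem isFareyChain_AProd_mul (hp : p ∈ FareyTriangle) (hs : 0 < s) (hW : W.det = 1)
    (hpW : p = (s * W 0 0, s * W 1 0)) :
    IsFareyChain ⌊1 / s⌋ (fun j ↦ (AProd j p * W) 0 0) (fun j ↦ (AProd j p * W) 0 1) := by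
  have hbounds (j : ℕ) := int_bounds_of_mul_mem_fareyTriangle hs
    (iterate_bcz_eq hpW j ▸ bcz_mapsTo_fareyTriangle.iterate j hp)
  refine ⟨fun j ↦ (hbounds j).1, fun j ↦ (hbounds j).2.1, fun j ↦ ?_, fun j ↦ ?_⟩
  · simpa only [AProd_succ_mul_apply_zero] using (hbounds j).2.2
  · simp only [AProd_succ_mul_apply_zero]
    have hdet : (AProd j p * W).det = 1 := by rw [Matrix.det_mul, det_AProd, hW, one_mul]
    rw [Matrix.det_fin_two] at hdet
    linear_combination hdet

theorem AProd_zero_mul_apply (i j : Fin 2) : (AProd 0 p * W) i j = W i j := by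
  rw [AProd, Matrix.one_mul]

theorem AProd_one_mul_apply_zero (i : Fin 2) : (AProd 1 p * W) 0 i = W 1 i := by
  rw [AProd_succ_mul_apply_zero, AProd_zero_mul_apply]

theorem AProd_mul_apply_eq_of_isPeriodicPt (hs : s ≠ 0) (hpW : p = (s * W 0 0, s * W 1 0))
    {n : ℕ} (hn : Function.IsPeriodicPt bcz n p) :
    (AProd n p * W) 0 0 = W 0 0 ∧ (AProd (n + 1) p * W) 0 0 = W 1 0 := by
  have h := (iterate_bcz_eq hpW n).symm.trans (hn.eq.trans hpW)
  simpa only [Prod.mk.injEq, mul_right_inj' hs, Int.cast_inj, AProd_succ_mul_apply_zero] using h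

theorem minimalPeriod_pos_and_AProd_mul (hp : p ∈ FareyTriangle) (hs : 0 < s) (hW : W.det = 1)
    (hpW : p = (s * W 0 0, s * W 1 0)) :
    0 < Function.minimalPeriod bcz p ∧
      AProd (Function.minimalPeriod bcz p) p * W = W * !![1, 1; 0, 1] := by
  set u := fun j ↦ (AProd j p * W) 0 0
  set c := fun j ↦ (AProd j p * W) 0 1
  have hchain : IsFareyChain ⌊1 / s⌋ u c := isFareyChain_AProd_mul hp hs hW hpW
  have hfrac₀ : (c 0 : ℚ) / u 0 < ((c 0 + u 0 : ℤ) : ℚ) / u 0 := by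
    have hu₀ : (0 : ℚ) < u 0 := by exact_mod_cast hchain.pos 0
    rw [div_lt_div_iff_of_pos_right hu₀]
    push_cast
    linarith
  obtain ⟨n, hlt, hle⟩ := hchain.exists_frac_lt_le hfrac₀
  obtain ⟨hu, hc, hu', hc'⟩ := hchain.return_of_frac_lt_le hlt hle
  have hreturn : AProd (n + 1) p * W = W * !![1, 1; 0, 1] := by
    simp only [u, c, AProd_zero_mul_apply, AProd_one_mul_apply_zero,
      AProd_succ_mul_apply_zero (j := n + 1)] at hu hc hu' hc'
    ext i j
    fin_cases i <;> fin_cases j <;>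
      simp [Matrix.mul_apply, Fin.sum_univ_two, hu, hc, hu', hc', add_comm]
  have hperiodic : Function.IsPeriodicPt bcz (n + 1) p := by
    rw [Function.IsPeriodicPt, Function.IsFixedPt, iterate_bcz_eq hpW, hreturn]
    simpa [Matrix.mul_apply, Fin.sum_univ_two] using hpW.symm
  have hPpos := hperiodic.minimalPeriod_pos n.succ_pos
  refine ⟨hPpos, le_antisymm (hperiodic.minimalPeriod_le n.succ_pos) ?_ ▸ hreturn⟩
  by_contra! hPn
  obtain ⟨hP₀, hP₁⟩ := AProd_mul_apply_eq_of_isPeriodicPt hs.ne' hpW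
    (Function.isPeriodicPt_minimalPeriod bcz p)
  have hge := hchain.frac_zero_add_one_le hPpos (hP₀.trans (AProd_zero_mul_apply 0 0).symm)
    (hP₁.trans (AProd_one_mul_apply_zero 0).symm)
  have hle' := hchain.strictMono_frac.monotone (Nat.le_of_lt_succ hPn)
  linarith

end RationalSlope

theorem bcz_periodic_orbit_matrix_parabolic (k l : ℕ) (hk : 0 < k) (hkl : k ≤ l)
    (hcop : Nat.Coprime k l) (a : ℝ) (ha1 : (l : ℝ) / ((l : ℝ) + k) < a) (ha2 : a ≤ 1) :
    (a, a * k / l) ∈ FareyTriangle ∧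
    (∃ n : ℕ, 0 < n ∧ bcz^[n] (a, a * k / l) = (a, a * k / l)) ∧
    AProd (Function.minimalPeriod bcz (a, a * k / l)) (a, a * k / l)
      = !![1 - (k : ℤ) * l, (l : ℤ) ^ 2; -(k : ℤ) ^ 2, 1 + (k : ℤ) * l] ∧
    Matrix.trace (AProd (Function.minimalPeriod bcz (a, a * k / l)) (a, a * k / l))
      = 2 := by
  have hl : (0 : ℝ) < l := by exact_mod_cast hk.trans_le hkl
  have hkl' : (k : ℝ) ≤ l := by exact_mod_cast hkl
  have ha : 0 < a := (div_pos hl (by positivity)).trans ha1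
  have hp : (a, a * k / l) ∈ FareyTriangle := by
    rw [div_lt_iff₀ (by positivity)] at ha1
    refine ⟨ha, ha2, by positivity, ?_, ?_⟩
    · rw [div_le_one hl]
      nlinarith
    · rw [← sub_lt_iff_lt_add', lt_div_iff₀ hl]
      linarith
  obtain ⟨x, y, hbezout⟩ := Nat.isCoprime_iff_coprime.mpr hcop
  set W : Matrix (Fin 2) (Fin 2) ℤ := !![(l : ℤ), -x; (k : ℤ), y]
  have hW : W.det = 1 := by rw [Matrix.det_fin_two_of]; linear_combination hbezout
  obtain ⟨hPpos, hP⟩ := minimalPeriod_pos_and_AProd_mul hp (div_pos ha hl) hW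
    (by ext <;> simp [W] <;> field_simp)
  set P := Function.minimalPeriod bcz (a, a * k / l)
  have hA : AProd P (a, a * k / l)
      = !![1 - (k : ℤ) * l, (l : ℤ) ^ 2; -(k : ℤ) ^ 2, 1 + (k : ℤ) * l] := by
    calc AProd P (a, a * k / l) = AProd P (a, a * k / l) * W * W.adjugate := by
          rw [Matrix.mul_assoc, Matrix.mul_adjugate, hW, one_smul, Matrix.mul_one]
      _ = W * !![1, 1; 0, 1] * W.adjugate := by rw [hP]
      _ = _ := by
        rw [Matrix.adjugate_fin_two_of]
        ext i j
        fin_cases i <;> fin_cases j <;> simp [W, Matrix.mul_apply, Fin.sum_univ_two]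
        · linear_combination hbezout
        · ring
        · ring
        · linear_combination hbezout
  refine ⟨hp, ⟨P, hPpos, Function.isPeriodicPt_minimalPeriod bcz _⟩, hA, ?_⟩
  rw [hA, Matrix.trace_fin_two_of]
  ring
end
end
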